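/- arXiv:2111.14519 — 5 statements merged into one kernel-verified Lean document; each statement's English description precedes it below -/
import Mathlib

section
/- For every open interval (a,b) there exists a set P ⊆ (a,b) whose only accumulation points are a and b, which can be enumerated as a strictly increasing two-sided sequence (p_z)_{z∈ℤ} with infimum a and supremum b, such that for every z ∈ ℤ one has p_{z+1} − p_z < min{(p_z − a)², (b − p_{z+1})²}. -/
open Set Filter

set_option maxHeartbeats 1000000

lemma aux0 (a b : ℝ) (hab : a < b) (K : ℝ) (hK2 : 2 ≤ K)
    (hK : 2 / K ≤ (b - a) / 4) (N : ℤ) (hN : 1 ≤ N) (s : ℝ) (hs0 : 0 < s)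
    (hs : s ≤ 2 / K ^ 2) (hsum : a + 2 / K + s * N = b - 2 / K) :
    ∃ p : ℤ → ℝ, StrictMono p ∧ (∀ z, p z ∈ Set.Ioo a b) ∧
      IsGLB (Set.range p) a ∧ IsLUB (Set.range p) b ∧
      {x : ℝ | AccPt x (𝓟 (Set.range p))} = {a, b} ∧
      (∀ z : ℤ, p (z + 1) - p z < min ((p z - a) ^ 2) ((b - p (z + 1)) ^ 2)) := by
  classical
  have hKpos : (0:ℝ) < K := lt_of_lt_of_le two_pos hK2
  have hba : (0:ℝ) < b - a := sub_pos.mpr hab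
  have h2Kpos : (0:ℝ) < 2 / K := by positivity
  have h2Kba : 2 / K < b - a := lt_of_le_of_lt hK (by linarith)
  have hNR : (1:ℝ) ≤ (N:ℝ) := by exact_mod_cast hN
  -- definition
  set p : ℤ → ℝ := fun z =>
    if z ≤ 0 then a + 2 / (K - z)
    else if z ≤ N - 1 then a + 2 / K + s * z
    else b - 2 / (K + z - N) with hpdef
  -- formula lemmas
  have hbot : ∀ z : ℤ, z ≤ 0 → p z = a + 2 / (K - z) := by
    intro z hz; simp only [hpdef]; rw [if_pos hz]
  have hmid : ∀ z : ℤ, 0 ≤ z → z ≤ N → p z = a + 2 / K + s * z := by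
    intro z h0 hzN
    rcases eq_or_lt_of_le h0 with h | h
    · rw [hbot z h.ge]; rw [← h]; push_cast; ring_nf
    · have h1 : ¬ z ≤ 0 := not_le.mpr h
      simp only [hpdef]; rw [if_neg h1]
      by_cases h2 : z ≤ N - 1
      · rw [if_pos h2]
      · rw [if_neg h2]
        have hzz : (z:ℝ) = N := by exact_mod_cast le_antisymm hzN (by omega)
        rw [hzz]
        have : K + (N:ℝ) - N = K := by ring
        rw [this]; linarith [hsum]
  have htop : ∀ z : ℤ, N ≤ z → p z = b - 2 / (K + z - N) := by
    intro z hz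
    rcases eq_or_lt_of_le hz with h | h
    · rw [← h, hmid N (by omega) le_rfl]
      have : K + (N:ℝ) - N = K := by ring
      rw [this]; linarith [hsum]
    · have h1 : ¬ z ≤ 0 := by omega
      have h2 : ¬ z ≤ N - 1 := by omega
      simp only [hpdef]; rw [if_neg h1, if_neg h2]
  -- membership
  have hmem : ∀ z : ℤ, a < p z ∧ p z < b := by
    intro z
    rcases le_or_gt z 0 with hz | hz
    · rw [hbot z hz]
      have hzr : (z:ℝ) ≤ 0 := by exact_mod_cast hz
      have hd : (0:ℝ) < K - z := by linarith
      have h1 : 2 / (K - z) ≤ 2 / K :=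
        div_le_div_of_nonneg_left (by norm_num) hKpos (by linarith)
      have h0 : (0:ℝ) < 2 / (K - z) := by positivity
      exact ⟨by linarith, by linarith⟩
    · rcases le_or_gt z N with hzN | hzN
      · rw [hmid z hz.le hzN]
        have hz' : (0:ℝ) ≤ z := by exact_mod_cast hz.le
        have hzN' : (z:ℝ) ≤ N := by exact_mod_cast hzN
        have h1 : 0 ≤ s * z := by positivity
        have h2 : s * z ≤ s * N := by nlinarith
        exact ⟨by linarith, by linarith⟩
      · rw [htop z hzN.le]
        have hzr : (N:ℝ) ≤ z := by exact_mod_cast hzN.le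
        have hd : (0:ℝ) < K + z - N := by linarith
        have h1 : 2 / (K + z - N) ≤ 2 / K :=
          div_le_div_of_nonneg_left (by norm_num) hKpos (by linarith)
        have h2 : (0:ℝ) < 2 / (K + z - N) := by positivity
        exact ⟨by linarith, by linarith⟩
  -- algebra helpers
  have hAB : ∀ u : ℝ, 2 ≤ u → 0 < 2 / (u * (u + 1)) ∧ 2 / (u * (u + 1)) < 4 / (u + 1) ^ 2 := by
    intro u hu
    have hu0 : (0:ℝ) < u := by linarith
    have hu1 : (0:ℝ) < u + 1 := by linarith
    refine ⟨by positivity, ?_⟩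
    rw [div_lt_div_iff₀ (by positivity) (by positivity)]
    nlinarith
  have hC : ∀ u : ℝ, K ≤ u → 2 / (u * (u + 1)) < ((b - a) - 2 / u) ^ 2 := by
    intro u hu
    have hu0 : (0:ℝ) < u := lt_of_lt_of_le hKpos hu
    have hw : (0:ℝ) < 2 / u := by positivity
    have hw' : 2 / u ≤ 2 / K := div_le_div_of_nonneg_left (by norm_num) hKpos hu
    have hw4 : 2 / u ≤ (b - a) / 4 := hw'.trans hK
    have h1 : 2 / (u * (u + 1)) < 2 / (u * u) := by
      apply div_lt_div_of_pos_left (by norm_num) (by positivity)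
      nlinarith
    have h2 : 2 / (u * u) = (2 / u) ^ 2 / 2 := by
      field_simp
    nlinarith [sq_nonneg (2 / u)]
  -- fine mesh: s < 4/K^2 and  s ≤ 2/K^2
  have hslt : s < 4 / K ^ 2 := lt_of_le_of_lt hs (by
    rw [div_lt_div_iff₀ (by positivity) (by positivity)]; nlinarith)
  -- gap lemma
  have hgap : ∀ z : ℤ, p z < p (z + 1) ∧
      p (z + 1) - p z < min ((p z - a) ^ 2) ((b - p (z + 1)) ^ 2) := by
    intro z
    rcases le_or_gt (z + 1) 0 with hz | hz
    · -- bottom region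
      set u : ℝ := K - z - 1 with hu
      have hz1 : z ≤ -1 := by omega
      have huz : (z:ℝ) ≤ -1 := by exact_mod_cast hz1
      have hKu : K ≤ u := by rw [hu]; linarith
      have hu2 : 2 ≤ u := hK2.trans hKu
      have hu0 : (0:ℝ) < u := by linarith
      have hu1 : (0:ℝ) < u + 1 := by linarith
      have hp1 : p (z + 1) = a + 2 / u := by
        rw [hbot (z + 1) hz, hu]; push_cast; ring_nf
      have hp0 : p z = a + 2 / (u + 1) := by
        rw [hbot z (by omega)]
        have : K - (z:ℝ) = u + 1 := by rw [hu]; ring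
        rw [this]
      have hgapeq : p (z + 1) - p z = 2 / (u * (u + 1)) := by
        rw [hp0, hp1]; field_simp; ring
      obtain ⟨hA, hB⟩ := hAB u hu2
      have hll : 2 / (u + 1) < 2 / u := div_lt_div_of_pos_left (by norm_num) hu0 (by linarith)
      refine ⟨by rw [hp0, hp1]; linarith, ?_⟩
      rw [hgapeq, lt_min_iff]
      constructor
      · rw [hp0]
        have he : a + 2 / (u + 1) - a = 2 / (u + 1) := by ring
        rw [he, div_pow]
        norm_num
        exact hB
      · rw [hp1]
        have he : (b - (a + 2 / u)) = ((b - a) - 2 / u) := by ring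
        rw [he]; exact hC u hKu
    · rcases le_or_gt (z + 1) N with hzN | hzN
      · -- middle region
        have h0z : 0 ≤ z := by omega
        have hp0 : p z = a + 2 / K + s * z := hmid z h0z (by omega)
        have hp1 : p (z + 1) = a + 2 / K + s * (z + 1) := by
          rw [hmid (z + 1) (by omega) hzN]; push_cast; ring_nf
        have hgapeq : p (z + 1) - p z = s := by rw [hp0, hp1]; ring
        have hz' : (0:ℝ) ≤ z := by exact_mod_cast h0z
        have hzN' : (z:ℝ) + 1 ≤ N := by exact_mod_cast hzN
        refine ⟨by linarith [hgapeq], ?_⟩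
        rw [hgapeq, lt_min_iff]
        constructor
        · rw [hp0]
          have hsz : 0 ≤ s * z := mul_nonneg hs0.le hz'
          have h1 : 2 / K ≤ a + 2 / K + s * z - a := by linarith
          calc s < 4 / K ^ 2 := hslt
            _ = (2 / K) ^ 2 := by rw [div_pow]; norm_num
            _ ≤ (a + 2 / K + s * z - a) ^ 2 := by
                exact pow_le_pow_left₀ h2Kpos.le h1 2
        · rw [hp1]
          have hsz : s * (z + 1) ≤ s * N := mul_le_mul_of_nonneg_left hzN' hs0.le
          have h1 : 2 / K ≤ b - (a + 2 / K + s * (z + 1)) := by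
            push_cast at hsz ⊢
            linarith [hsum]
          calc s < 4 / K ^ 2 := hslt
            _ = (2 / K) ^ 2 := by rw [div_pow]; norm_num
            _ ≤ (b - (a + 2 / K + s * (z + 1))) ^ 2 := by
                exact pow_le_pow_left₀ h2Kpos.le h1 2
      · -- top region
        set u : ℝ := K + z - N with hu
        have hzN0 : N ≤ z := by omega
        have hzr : (N:ℝ) ≤ z := by exact_mod_cast hzN0
        have hKu : K ≤ u := by rw [hu]; linarith
        have hu2 : 2 ≤ u := hK2.trans hKu
        have hu0 : (0:ℝ) < u := by linarith
        have hu1 : (0:ℝ) < u + 1 := by linarith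
        have hp0 : p z = b - 2 / u := by rw [htop z hzN0, hu]
        have hp1 : p (z + 1) = b - 2 / (u + 1) := by
          rw [htop (z + 1) (by omega)]
          have : K + ((z:ℤ) + 1 : ℤ) - (N:ℝ) = u + 1 := by rw [hu]; push_cast; ring
          rw [this]
        have hgapeq : p (z + 1) - p z = 2 / (u * (u + 1)) := by
          rw [hp0, hp1]; field_simp; ring
        obtain ⟨hA, hB⟩ := hAB u hu2
        have hll : 2 / (u + 1) < 2 / u := div_lt_div_of_pos_left (by norm_num) hu0 (by linarith)
        refine ⟨by rw [hp0, hp1]; linarith, ?_⟩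
        rw [hgapeq, lt_min_iff]
        constructor
        · rw [hp0]
          have he : (b - 2 / u - a) = ((b - a) - 2 / u) := by ring
          rw [he]; exact hC u hKu
        · rw [hp1]
          have he : b - (b - 2 / (u + 1)) = 2 / (u + 1) := by ring
          rw [he, div_pow]
          norm_num
          exact hB
  have hmono : StrictMono p := strictMono_int_of_lt_succ fun z => (hgap z).1
  -- near a
  have hnear_a : ∀ ε : ℝ, 0 < ε → ∃ z : ℤ, a < p z ∧ p z < a + ε := by
    intro ε hε
    set n : ℕ := ⌈2 / ε⌉₊ with hn
    refine ⟨-(n:ℤ), (hmem _).1, ?_⟩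
    rw [hbot (-(n:ℤ)) (by omega)]
    have hc : (2:ℝ) / ε ≤ n := Nat.le_ceil _
    have hn0 : (0:ℝ) ≤ (n:ℕ) := Nat.cast_nonneg n
    have hd : (0:ℝ) < K - (-(n:ℤ) : ℤ) := by push_cast; linarith
    have h2 : 2 ≤ (n:ℝ) * ε := by
      rw [div_le_iff₀ hε] at hc; linarith
    have h3 : 0 < ε * K := mul_pos hε hKpos
    have : 2 / (K - ((-(n:ℤ) : ℤ) : ℝ)) < ε := by
      rw [div_lt_iff₀ hd]
      push_cast
      nlinarith
    linarith
  have hnear_b : ∀ ε : ℝ, 0 < ε → ∃ z : ℤ, b - ε < p z ∧ p z < b := by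
    intro ε hε
    set n : ℕ := ⌈2 / ε⌉₊ with hn
    refine ⟨N + n, ?_, (hmem _).2⟩
    rw [htop (N + n) (by omega)]
    have hc : (2:ℝ) / ε ≤ n := Nat.le_ceil _
    have hn0 : (0:ℝ) ≤ (n:ℕ) := Nat.cast_nonneg n
    have hd : (0:ℝ) < K + ((N + n : ℤ) : ℝ) - N := by push_cast; linarith
    have h2 : 2 ≤ (n:ℝ) * ε := by
      rw [div_le_iff₀ hε] at hc; linarith
    have h3 : 0 < ε * K := mul_pos hε hKpos
    have : 2 / (K + ((N + n : ℤ) : ℝ) - N) < ε := by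
      rw [div_lt_iff₀ hd]
      push_cast
      nlinarith
    linarith
  -- GLB
  have hglb : IsGLB (Set.range p) a := by
    constructor
    · rintro x ⟨z, rfl⟩; exact (hmem z).1.le
    · intro c hc
      by_contra h
      push_neg at h
      obtain ⟨z, hz1, hz2⟩ := hnear_a (c - a) (by linarith)
      have := hc ⟨z, rfl⟩
      linarith
  have hlub : IsLUB (Set.range p) b := by
    constructor
    · rintro x ⟨z, rfl⟩; exact (hmem z).2.le
    · intro c hc
      by_contra h
      push_neg at h
      obtain ⟨z, hz1, hz2⟩ := hnear_b (b - c) (by linarith)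
      have := hc ⟨z, rfl⟩
      linarith
  -- accumulation points
  have hacc : {x : ℝ | AccPt x (𝓟 (Set.range p))} = {a, b} := by
    ext x
    simp only [Set.mem_setOf_eq, Set.mem_insert_iff, Set.mem_singleton_iff]
    constructor
    · intro hx
      by_contra hxab
      push_neg at hxab
      obtain ⟨hxa, hxb⟩ := hxab
      rw [accPt_iff_nhds] at hx
      rcases lt_trichotomy x a with h | h | h
      · obtain ⟨y, ⟨hyU, z, rfl⟩, hyx⟩ := hx (Set.Iio a) (Iio_mem_nhds h)
        exact absurd (hmem z).1 (not_lt.mpr (le_of_lt hyU))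
      · exact hxa h
      · rcases lt_trichotomy x b with h' | h' | h'
        · -- a < x < b
          have hex : ∃ z : ℤ, p z ≤ x := by
            obtain ⟨z, hz1, hz2⟩ := hnear_a (x - a) (by linarith)
            exact ⟨z, by linarith⟩
          have hbdd : ∃ B : ℤ, ∀ z : ℤ, p z ≤ x → z ≤ B := by
            obtain ⟨z', hz1, hz2⟩ := hnear_b (b - x) (by linarith)
            exact ⟨z', fun z hz => (hmono.lt_iff_lt.mp (by linarith)).le⟩
          obtain ⟨n, hn1, hn2⟩ := Int.exists_greatest_of_bdd hbdd hex
          have hn3 : x < p (n + 1) := by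
            by_contra hcon
            push_neg at hcon
            exact absurd (hn2 (n + 1) hcon) (by omega)
          rcases eq_or_lt_of_le hn1 with heq | hlt
          · -- x = p n
            obtain ⟨y, ⟨hyU, z, rfl⟩, hyx⟩ :=
              hx (Set.Ioo (p (n - 1)) (p (n + 1)))
                (Ioo_mem_nhds (by rw [← heq]; exact hmono (by omega)) hn3)
            have h1 : n - 1 < z := hmono.lt_iff_lt.mp hyU.1
            have h2 : z < n + 1 := hmono.lt_iff_lt.mp hyU.2
            have : z = n := by omega
            rw [this] at hyx
            exact hyx heq
          · obtain ⟨y, ⟨hyU, z, rfl⟩, hyx⟩ :=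
              hx (Set.Ioo (p n) (p (n + 1))) (Ioo_mem_nhds hlt hn3)
            have h1 : n < z := hmono.lt_iff_lt.mp hyU.1
            have h2 : z < n + 1 := hmono.lt_iff_lt.mp hyU.2
            omega
        · exact hxb h'
        · obtain ⟨y, ⟨hyU, z, rfl⟩, hyx⟩ := hx (Set.Ioi b) (Ioi_mem_nhds h')
          exact absurd (hmem z).2 (not_lt.mpr (le_of_lt hyU))
    · intro hx
      rw [accPt_iff_nhds]
      intro U hU
      rcases hx with rfl | rfl
      · obtain ⟨ε, hε, hball⟩ := Metric.mem_nhds_iff.mp hU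
        obtain ⟨z, hz1, hz2⟩ := hnear_a ε hε
        refine ⟨p z, ⟨hball ?_, z, rfl⟩, ne_of_gt hz1⟩
        rw [Metric.mem_ball, Real.dist_eq, abs_of_pos (by linarith)]
        linarith
      · obtain ⟨ε, hε, hball⟩ := Metric.mem_nhds_iff.mp hU
        obtain ⟨z, hz1, hz2⟩ := hnear_b ε hε
        refine ⟨p z, ⟨hball ?_, z, rfl⟩, ne_of_lt hz2⟩
        rw [Metric.mem_ball, Real.dist_eq, abs_of_neg (by linarith)]
        linarith
  exact ⟨p, hmono, fun z => ⟨(hmem z).1, (hmem z).2⟩, hglb, hlub, hacc,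
    fun z => (hgap z).2⟩

theorem stmt0 (a b : ℝ) (hab : a < b) :
    ∃ p : ℤ → ℝ, StrictMono p ∧ (∀ z, p z ∈ Set.Ioo a b) ∧
      IsGLB (Set.range p) a ∧ IsLUB (Set.range p) b ∧
      {x : ℝ | AccPt x (𝓟 (Set.range p))} = {a, b} ∧
      (∀ z : ℤ, p (z + 1) - p z < min ((p z - a) ^ 2) ((b - p (z + 1)) ^ 2)) := by
  have hba : (0:ℝ) < b - a := sub_pos.mpr hab
  set K : ℝ := ((max 2 ⌈8 / (b - a)⌉₊ : ℕ) : ℝ) with hKdef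
  have hK2 : (2:ℝ) ≤ K := by
    rw [hKdef]; exact_mod_cast Nat.cast_le.mpr (le_max_left _ _)
  have hKpos : (0:ℝ) < K := by linarith
  have hK8 : 8 / (b - a) ≤ K := by
    calc 8 / (b - a) ≤ (⌈8 / (b - a)⌉₊ : ℝ) := Nat.le_ceil _
      _ ≤ K := by rw [hKdef]; exact_mod_cast Nat.cast_le.mpr (le_max_right _ _)
  have hK : 2 / K ≤ (b - a) / 4 := by
    rw [div_le_div_iff₀ hKpos (by norm_num)]
    have : 8 ≤ (b - a) * K := by
      rw [div_le_iff₀ hba] at hK8; linarith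
    linarith
  set L : ℝ := b - a - 4 / K with hLdef
  have hLpos : 0 < L := by
    rw [hLdef]
    have : 4 / K ≤ (b - a) / 2 := by
      rw [div_le_div_iff₀ hKpos (by norm_num)]
      rw [div_le_iff₀ hba] at hK8; linarith
    linarith
  set N : ℤ := ((⌈L * K ^ 2 / 2⌉₊ : ℕ) : ℤ) with hNdef
  have hN1 : 1 ≤ N := by
    rw [hNdef]
    exact_mod_cast Nat.one_le_cast.mpr (Nat.ceil_pos.mpr (by positivity))
  have hNR : L * K ^ 2 / 2 ≤ (N:ℝ) := by
    rw [hNdef]; push_cast; exact Nat.le_ceil _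
  have hNpos : (0:ℝ) < N := by
    have : (1:ℝ) ≤ N := by exact_mod_cast hN1
    linarith
  clear_value K
  clear_value L
  clear_value N
  refine aux0 a b hab K hK2 hK N hN1 (L / N) (by positivity) ?_ ?_
  · rw [div_le_div_iff₀ hNpos (by positivity)]
    push_cast at hNR ⊢
    linarith
  · have : L / N * N = L := div_mul_cancel₀ L (ne_of_gt hNpos)
    rw [this, hLdef]
    ring
end

section
/- Let J = [a₁, a₂] be a nondegenerate closed interval and let H ⊆ J be an F_σ set of Lebesgue measure zero. Then there exists a nondecreasing continuous function φ : J → ℝ, nonconstant, with φ'(x) = 0 for Lebesgue-almost every x ∈ J, such that φ(a₁) = a₁, φ(a₂) = a₂, and φ'(x) = 0 for every x ∈ H (derivatives taken relative to J). -/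
/-!
Write `H = ⋃ n, u n` with each `u n` closed and null, hence with empty interior. Nested closed
intervals, whose level `n` avoids `u n` and whose lengths shrink by a factor `4` while their number
doubles, cut out a Cantor set `K ⊆ (a₁, a₂)` of measure zero missing `H`. The coin-tossing measure
pushed onto `K` is atomless and singular, so its rescaled distribution function is continuous, has
derivative `0` almost everywhere, and is locally constant off `K`, in particular near each point
of `H`.
-/

open Set MeasureTheory Filter Topology ENNReal ProbabilityTheory CantorScheme PiNat

lemma exists_Icc_subset_Ioo_disjoint {F : Set ℝ} (hF : IsClosed F) (hF_int : interior F = ∅)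
    {l r ε : ℝ} (hlr : l < r) (hε : 0 < ε) :
    ∃ p q, p < q ∧ Icc p q ⊆ Ioo l r ∧ q - p ≤ ε ∧ Disjoint (Icc p q) F := by
  have hU : IsOpen (Ioo l r ∩ Fᶜ) := isOpen_Ioo.inter hF.isOpen_compl
  obtain ⟨z, hz⟩ : (Ioo l r ∩ Fᶜ).Nonempty := by
    rw [inter_compl_nonempty_iff]
    exact fun h => (nonempty_Ioo.2 hlr).ne_empty (subset_empty_iff.1 <|
      hF_int ▸ interior_maximal h isOpen_Ioo)
  obtain ⟨ρ, hρ, hball⟩ := Metric.isOpen_iff.1 hU z hz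
  set δ := min (ρ / 2) (ε / 2)
  have hδ : 0 < δ := lt_min (half_pos hρ) (half_pos hε)
  have hIcc : Icc (z - δ) (z + δ) ⊆ Ioo l r ∩ Fᶜ := by
    rw [← Real.closedBall_eq_Icc]
    exact (Metric.closedBall_subset_ball ((min_le_left _ _).trans_lt (half_lt_self hρ))).trans
      hball
  refine ⟨z - δ, z + δ, by linarith, hIcc.trans inter_subset_left, ?_,
    disjoint_left.2 fun t ht => (hIcc ht).2⟩
  linarith [min_le_right (ρ / 2) (ε / 2)]

lemma tendsto_ofReal_mul_pow_atTop_nhds_zero (c : ℝ) {r : ℝ} (hr₀ : 0 ≤ r) (hr₁ : r < 1) :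
    Tendsto (fun n : ℕ => ENNReal.ofReal (c * r ^ n)) atTop (𝓝 0) := by
  simpa using ENNReal.tendsto_ofReal ((tendsto_pow_atTop_nhds_zero_of_lt_one hr₀ hr₁).const_mul c)

noncomputable def halfInterval (I : ℝ × ℝ) : Bool → ℝ × ℝ
  | false => (I.1, (I.1 + I.2) / 2)
  | true => ((I.1 + I.2) / 2, I.2)

lemma halfInterval_fst_lt_snd {I : ℝ × ℝ} (hI : I.1 < I.2) (b : Bool) :
    (halfInterval I b).1 < (halfInterval I b).2 := by
  cases b <;> simp only [halfInterval] <;> linarith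

lemma Ioo_halfInterval_subset {I : ℝ × ℝ} (hI : I.1 ≤ I.2) (b : Bool) :
    Ioo (halfInterval I b).1 (halfInterval I b).2 ⊆ Ioo I.1 I.2 := by
  cases b <;> exact Ioo_subset_Ioo (by simp only [halfInterval]; linarith)
    (by simp only [halfInterval]; linarith)

lemma disjoint_Ioo_halfInterval (I : ℝ × ℝ) :
    Disjoint (Ioo (halfInterval I false).1 (halfInterval I false).2)
      (Ioo (halfInterval I true).1 (halfInterval I true).2) :=
  disjoint_left.2 fun _ h₁ h₂ => (h₁.2.trans h₂.1).false

def IsAvoidingChild (F : Set ℝ) (I : ℝ × ℝ) (b : Bool) (J : ℝ × ℝ) : Prop :=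
  J.1 < J.2 ∧ Icc J.1 J.2 ⊆ Ioo (halfInterval I b).1 (halfInterval I b).2 ∧
    J.2 - J.1 ≤ (I.2 - I.1) / 4 ∧ Disjoint (Icc J.1 J.2) F

-- The hypothesis `I.1 < I.2` sits inside the existential so that `choose` gives a total function.
lemma exists_isAvoidingChild {F : Set ℝ} (hF : IsClosed F) (hF_int : interior F = ∅)
    (I : ℝ × ℝ) (b : Bool) : ∃ J, I.1 < I.2 → IsAvoidingChild F I b J := by
  by_cases hI : I.1 < I.2
  · obtain ⟨p, q, hpq, hsub, hlen, hdisj⟩ := exists_Icc_subset_Ioo_disjoint hF hF_int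
      (halfInterval_fst_lt_snd hI b) (by linarith : 0 < (I.2 - I.1) / 4)
    exact ⟨(p, q), fun _ => ⟨hpq, hsub, hlen, hdisj⟩⟩
  · exact ⟨I, fun h => absurd h hI⟩

-- Words are read from their last letter, as `PiNat.res` builds them.
def treeInterval (child : ℕ → ℝ × ℝ → Bool → ℝ × ℝ) (I₀ : ℝ × ℝ) : List Bool → ℝ × ℝ
  | [] => I₀
  | b :: l => child l.length (treeInterval child I₀ l) b

section TreeInterval

variable {u : ℕ → Set ℝ} {child : ℕ → ℝ × ℝ → Bool → ℝ × ℝ} {I₀ : ℝ × ℝ}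
  (hchild : ∀ n I b, I.1 < I.2 → IsAvoidingChild (u n) I b (child n I b)) (hI₀ : I₀.1 < I₀.2)
include hchild hI₀

lemma treeInterval_fst_lt_snd : ∀ l, (treeInterval child I₀ l).1 < (treeInterval child I₀ l).2
  | [] => hI₀
  | b :: l => (hchild _ _ b (treeInterval_fst_lt_snd l)).1

lemma isAvoidingChild_treeInterval_cons (b : Bool) (l : List Bool) :
    IsAvoidingChild (u l.length) (treeInterval child I₀ l) b (treeInterval child I₀ (b :: l)) :=
  hchild _ _ b (treeInterval_fst_lt_snd hchild hI₀ l)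

lemma Icc_treeInterval_cons_subset (b : Bool) (l : List Bool) :
    Icc (treeInterval child I₀ (b :: l)).1 (treeInterval child I₀ (b :: l)).2 ⊆
      Ioo (treeInterval child I₀ l).1 (treeInterval child I₀ l).2 :=
  (isAvoidingChild_treeInterval_cons hchild hI₀ b l).2.1.trans
    (Ioo_halfInterval_subset (treeInterval_fst_lt_snd hchild hI₀ l).le b)

lemma disjoint_Icc_treeInterval_false_true (l : List Bool) :
    Disjoint (Icc (treeInterval child I₀ (false :: l)).1 (treeInterval child I₀ (false :: l)).2)
      (Icc (treeInterval child I₀ (true :: l)).1 (treeInterval child I₀ (true :: l)).2) :=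
  (disjoint_Ioo_halfInterval _).mono (isAvoidingChild_treeInterval_cons hchild hI₀ false l).2.1
    (isAvoidingChild_treeInterval_cons hchild hI₀ true l).2.1

lemma treeInterval_length_le : ∀ l : List Bool,
    (treeInterval child I₀ l).2 - (treeInterval child I₀ l).1 ≤ (I₀.2 - I₀.1) * (1 / 4) ^ l.length
  | [] => by simp [treeInterval]
  | b :: l => by
    have h := (isAvoidingChild_treeInterval_cons hchild hI₀ b l).2.2.1
    have ih := treeInterval_length_le l
    rw [List.length_cons, pow_succ, ← mul_assoc]
    linarith

lemma volume_eq_zero_of_subset_treeInterval {s : Set ℝ}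
    (hs : ∀ y ∈ s, ∀ n, ∃ l : List Bool, l.length = n ∧
      y ∈ Icc (treeInterval child I₀ l).1 (treeInterval child I₀ l).2) :
    volume s = 0 := by
  have hle : ∀ n : ℕ, volume s ≤ ENNReal.ofReal ((I₀.2 - I₀.1) * (1 / 2) ^ n) := by
    intro n
    have hcover : s ⊆ ⋃ v : List.Vector Bool n,
        Icc (treeInterval child I₀ v.1).1 (treeInterval child I₀ v.1).2 := fun y hy => by
      obtain ⟨l, hl, hyl⟩ := hs y hy n
      exact mem_iUnion.2 ⟨⟨l, hl⟩, hyl⟩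
    calc volume s
        ≤ ∑ v : List.Vector Bool n,
            volume (Icc (treeInterval child I₀ v.1).1 (treeInterval child I₀ v.1).2) :=
          (measure_mono hcover).trans (measure_iUnion_fintype_le _ _)
      _ ≤ ∑ _v : List.Vector Bool n, ENNReal.ofReal ((I₀.2 - I₀.1) * (1 / 4) ^ n) := by
          refine Finset.sum_le_sum fun v _ => ?_
          rw [Real.volume_Icc]
          have h := treeInterval_length_le hchild hI₀ v.1
          rw [v.2] at h
          exact ENNReal.ofReal_le_ofReal h
      _ = ENNReal.ofReal ((I₀.2 - I₀.1) * (1 / 2) ^ n) := by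
          rw [Finset.sum_const, Finset.card_univ, card_vector, nsmul_eq_mul,
            ← ENNReal.ofReal_natCast, ← ENNReal.ofReal_mul (by positivity)]
          congr 1
          rw [mul_left_comm, Fintype.card_bool, Nat.cast_pow, Nat.cast_ofNat, ← mul_pow]
          norm_num
  exact le_antisymm (ge_of_tendsto' (tendsto_ofReal_mul_pow_atTop_nhds_zero _ (by norm_num)
    (by norm_num)) hle) zero_le

end TreeInterval

theorem exists_cantor_embedding_avoiding {u : ℕ → Set ℝ} (hu : ∀ n, IsClosed (u n))
    (hu_int : ∀ n, interior (u n) = ∅) {a b : ℝ} (hab : a < b) :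
    ∃ g : (ℕ → Bool) → ℝ, Continuous g ∧ Function.Injective g ∧ range g ⊆ Ioo a b ∧
      (∀ n, Disjoint (range g) (u n)) ∧ volume (range g) = 0 := by
  choose child hchild using fun n => exists_isAvoidingChild (hu n) (hu_int n)
  have hI₀ : (a, b).1 < (a, b).2 := hab
  set A : List Bool → Set ℝ :=
    fun l => Icc (treeInterval child (a, b) l).1 (treeInterval child (a, b) l).2
  have hanti : ClosureAntitone A := CantorScheme.Antitone.closureAntitone
    (fun l b => (Icc_treeInterval_cons_subset hchild hI₀ b l).trans Ioo_subset_Icc_self)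
    fun _ => isClosed_Icc
  have hdisj : CantorScheme.Disjoint A := by
    rintro l (_ | _) (_ | _) hne
    exacts [absurd rfl hne, disjoint_Icc_treeInterval_false_true hchild hI₀ l,
      (disjoint_Icc_treeInterval_false_true hchild hI₀ l).symm, absurd rfl hne]
  have hdiam : VanishingDiam A := fun x =>
    tendsto_of_tendsto_of_tendsto_of_le_of_le tendsto_const_nhds
      (tendsto_ofReal_mul_pow_atTop_nhds_zero (b - a) (r := 1 / 4) (by norm_num) (by norm_num))
      (fun _ => zero_le) fun n => by
        simpa only [A, Real.ediam_Icc, res_length] using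
          ENNReal.ofReal_le_ofReal (treeInterval_length_le hchild hI₀ (res x n))
  have hdom := hanti.map_of_vanishingDiam hdiam
    fun l => nonempty_Icc.2 (treeInterval_fst_lt_snd hchild hI₀ l).le
  set g : (ℕ → Bool) → ℝ := fun x => (inducedMap A).2 ⟨x, hdom ▸ mem_univ x⟩
  have hg : ∀ x n, g x ∈ A (res x n) := fun x n => map_mem _ n
  refine ⟨g, hdiam.map_continuous.comp (continuous_id.subtype_mk _),
    hdisj.map_injective.comp fun x y h => congrArg Subtype.val h, ?_, fun n => ?_, ?_⟩
  · rintro - ⟨x, rfl⟩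
    exact Icc_treeInterval_cons_subset hchild hI₀ (x 0) [] (hg x 1)
  · refine disjoint_left.2 ?_
    rintro - ⟨x, rfl⟩
    have h := (isAvoidingChild_treeInterval_cons hchild hI₀ (x n) (res x n)).2.2.2
    rw [res_length] at h
    exact disjoint_left.1 h (res_succ x n ▸ hg x (n + 1))
  · refine volume_eq_zero_of_subset_treeInterval hchild hI₀ ?_
    rintro - ⟨x, rfl⟩ n
    exact ⟨res x n, res_length x n, hg x n⟩

lemma nullSingletonClass_infinitePi {X : ℕ → Type*} [∀ n, MeasurableSpace (X n)]
    [∀ n, MeasurableSingletonClass (X n)] (μ : ∀ n, Measure (X n))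
    [∀ n, IsProbabilityMeasure (μ n)] {c : ℝ≥0∞} (hc : c < 1) (hμ : ∀ n x, μ n {x} ≤ c) :
    NullSingletonClass (Measure.infinitePi μ) := by
  refine ⟨fun x => le_antisymm (ge_of_tendsto' (tendsto_pow_atTop_nhds_zero_of_lt_one hc)
    fun n => ?_) zero_le⟩
  calc Measure.infinitePi μ {x}
      ≤ Measure.infinitePi μ ((Finset.range n : Set ℕ).pi fun i => {x i}) :=
        measure_mono fun y hy i _ => by rw [mem_singleton_iff.1 hy]; rfl
    _ = ∏ i ∈ Finset.range n, μ i {x i} :=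
        Measure.infinitePi_pi _ fun i _ => measurableSet_singleton _
    _ ≤ c ^ n := by
        simpa using Finset.prod_le_prod' fun i (_ : i ∈ Finset.range n) => hμ i (x i)

lemma nullSingletonClass_map_of_injective {α β : Type*} [MeasurableSpace α] [MeasurableSpace β]
    [MeasurableSingletonClass β] {μ : Measure α} [NullSingletonClass μ] {g : α → β}
    (hg : Measurable g) (hinj : Function.Injective g) : NullSingletonClass (μ.map g) :=
  ⟨fun y => by
    rw [Measure.map_apply hg (measurableSet_singleton y)]
    exact (Set.subsingleton_singleton.preimage hinj).countable.measure_zero μ⟩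

lemma exists_nullSingletonClass_isProbabilityMeasure_of_injective {β : Type*} [MeasurableSpace β]
    [MeasurableSingletonClass β] {g : (ℕ → Bool) → β} (hg : Measurable g)
    (hinj : Function.Injective g) (hrange : MeasurableSet (range g)) :
    ∃ μ : Measure β, IsProbabilityMeasure μ ∧ NullSingletonClass μ ∧ μ (range g)ᶜ = 0 := by
  let P := Measure.infinitePi fun _ : ℕ => uniformOn (univ : Set Bool)
  have : NullSingletonClass P := nullSingletonClass_infinitePi _ (c := 2⁻¹) (by norm_num)
    fun _ b => by rw [uniformOn_univ]; simp
  refine ⟨P.map g, Measure.isProbabilityMeasure_map hg.aemeasurable,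
    nullSingletonClass_map_of_injective hg hinj, ?_⟩
  simp [Measure.map_apply hg hrange.compl]

namespace StieltjesFunction

variable (f : StieltjesFunction ℝ)

lemma continuous_of_nullSingletonClass [NullSingletonClass f.measure] : Continuous f := by
  refine continuous_iff_continuousAt.2 fun x => ?_
  rw [f.mono.continuousAt_iff_leftLim_eq_rightLim, f.rightLim_eq]
  have h := f.measure_singleton x
  rw [MeasureTheory.measure_singleton, eq_comm, ENNReal.ofReal_eq_zero, sub_nonpos] at h
  exact le_antisymm (f.mono.leftLim_le le_rfl) h

lemma ae_hasDerivAt_zero_of_mutuallySingular (h : f.measure ⟂ₘ volume) :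
    ∀ᵐ x, HasDerivAt f 0 x := by
  filter_upwards [f.ae_hasDerivAt, (Measure.rnDeriv_eq_zero _ _).2 h] with x hx hx0
  simpa [hx0] using hx

lemma eq_of_measure_Ioc_eq_zero {a b : ℝ} (hab : a ≤ b) (h : f.measure (Ioc a b) = 0) :
    f b = f a := by
  rw [measure_Ioc, ENNReal.ofReal_eq_zero, sub_nonpos] at h
  exact le_antisymm h (f.mono hab)

lemma hasDerivAt_zero_of_measure_eq_zero {U : Set ℝ} (hU : IsOpen U) (hμ : f.measure U = 0)
    {x : ℝ} (hx : x ∈ U) : HasDerivAt f 0 x := by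
  obtain ⟨l, r, hxlr, hlr⟩ := mem_nhds_iff_exists_Ioo_subset.1 (hU.mem_nhds hx)
  have hconst : ∀ y ∈ Ioo l r, ∀ z ∈ Ioo l r, y ≤ z → f z = f y := fun y hy z hz hyz =>
    f.eq_of_measure_Ioc_eq_zero hyz <|
      measure_mono_null (fun t ht => hlr ⟨hy.1.trans ht.1, ht.2.trans_lt hz.2⟩) hμ
  refine (hasDerivAt_const x (f x)).congr_of_eventuallyEq ?_
  filter_upwards [Ioo_mem_nhds hxlr.1 hxlr.2] with y hy
  rcases le_total y x with hyx | hxy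
  · exact (hconst y hy x hxlr hyx).symm
  · exact hconst x hxlr y hy hxy

end StieltjesFunction

lemma exists_singular_function_of_measure {a b : ℝ} (hab : a ≤ b) (μ : Measure ℝ)
    [IsProbabilityMeasure μ] [NullSingletonClass μ] {K : Set ℝ} (hK : IsClosed K)
    (hK_null : volume K = 0) (hμK : μ Kᶜ = 0) (hK_sub : K ⊆ Ioo a b) :
    ∃ φ : ℝ → ℝ, Monotone φ ∧ Continuous φ ∧ φ a = a ∧ φ b = b ∧
      (∀ᵐ x, HasDerivAt φ 0 x) ∧ ∀ x ∉ K, HasDerivAt φ 0 x := by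
  have hF : (cdf μ).measure = μ := measure_cdf μ
  have : NullSingletonClass (cdf μ).measure := by rw [hF]; infer_instance
  have hFa : cdf μ a = 0 := by
    have : μ (Iic a) = 0 := measure_mono_null (fun x hx hxK => (hK_sub hxK).1.not_ge hx) hμK
    simp [cdf_eq_real, measureReal_def, this]
  have hFb : cdf μ b = 1 := by
    have : μ (Iic b)ᶜ = 0 := measure_mono_null (fun x hx hxK => hx (hK_sub hxK).2.le) hμK
    simp [cdf_eq_real, measureReal_def, (prob_compl_eq_zero_iff measurableSet_Iic).1 this]
  have hderiv : ∀ x, HasDerivAt (cdf μ) 0 x → HasDerivAt (fun t => a + (b - a) * cdf μ t) 0 x :=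
    fun x hx => by simpa using (hx.const_mul (b - a)).const_add a
  refine ⟨fun t => a + (b - a) * cdf μ t, fun s t hst => ?_, ?_, by simp [hFa], by simp [hFb],
    ?_, fun x hx => hderiv x ?_⟩
  · exact add_le_add_right (mul_le_mul_of_nonneg_left (monotone_cdf μ hst) (sub_nonneg.2 hab)) a
  · exact continuous_const.add (continuous_const.mul (cdf μ).continuous_of_nullSingletonClass)
  · refine ((cdf μ).ae_hasDerivAt_zero_of_mutuallySingular ?_).mono hderiv
    rw [hF]
    exact ⟨Kᶜ, hK.measurableSet.compl, hμK, by rwa [compl_compl]⟩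
  · exact (cdf μ).hasDerivAt_zero_of_measure_eq_zero hK.isOpen_compl (by rwa [hF]) hx

theorem stmt1_general (a₁ a₂ : ℝ) (hab : a₁ < a₂) (H : Set ℝ)
    (hFσ : ∃ u : ℕ → Set ℝ, (∀ n, IsClosed (u n)) ∧ H = ⋃ n, u n)
    (hnull : volume H = 0) :
    ∃ φ : ℝ → ℝ, MonotoneOn φ (Set.Icc a₁ a₂) ∧ ContinuousOn φ (Set.Icc a₁ a₂) ∧
      φ a₁ = a₁ ∧ φ a₂ = a₂ ∧ ¬ (∀ x ∈ Set.Icc a₁ a₂, ∀ y ∈ Set.Icc a₁ a₂, φ x = φ y) ∧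
      (∀ᵐ x, x ∈ Set.Icc a₁ a₂ → HasDerivWithinAt φ 0 (Set.Icc a₁ a₂) x) ∧
      (∀ x ∈ H, HasDerivWithinAt φ 0 (Set.Icc a₁ a₂) x) := by
  obtain ⟨u, hu, rfl⟩ := hFσ
  have hu_int : ∀ n, interior (u n) = ∅ := fun n =>
    volume.interior_eq_empty_of_null (measure_mono_null (subset_iUnion u n) hnull)
  obtain ⟨g, hg_cont, hg_inj, hg_Ioo, hg_disj, hg_null⟩ :=
    exists_cantor_embedding_avoiding hu hu_int hab
  have hK : IsClosed (range g) := (isCompact_range hg_cont).isClosed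
  obtain ⟨μ, hμ_prob, hμ_atomless, hμK⟩ :=
    exists_nullSingletonClass_isProbabilityMeasure_of_injective hg_cont.measurable hg_inj
      hK.measurableSet
  obtain ⟨φ, hmono, hcont, h₁, h₂, hae, hoff⟩ :=
    exists_singular_function_of_measure hab.le μ hK hg_null hμK hg_Ioo
  refine ⟨φ, hmono.monotoneOn _, hcont.continuousOn, h₁, h₂, fun h => hab.ne ?_, ?_, ?_⟩
  · simpa [h₁, h₂] using h a₁ (left_mem_Icc.2 hab.le) a₂ (right_mem_Icc.2 hab.le)
  · filter_upwards [hae] with x hx _ using hx.hasDerivWithinAt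
  · intro x hx
    obtain ⟨n, hn⟩ := mem_iUnion.1 hx
    exact (hoff x fun hxK => disjoint_left.1 (hg_disj n) hxK hn).hasDerivWithinAt

theorem stmt1 (a₁ a₂ : ℝ) (hab : a₁ < a₂) (H : Set ℝ) (hH : H ⊆ Set.Icc a₁ a₂)
    (hFσ : ∃ u : ℕ → Set ℝ, (∀ n, IsClosed (u n)) ∧ H = ⋃ n, u n)
    (hnull : volume H = 0) :
    ∃ φ : ℝ → ℝ, MonotoneOn φ (Set.Icc a₁ a₂) ∧ ContinuousOn φ (Set.Icc a₁ a₂) ∧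
      φ a₁ = a₁ ∧ φ a₂ = a₂ ∧ ¬ (∀ x ∈ Set.Icc a₁ a₂, ∀ y ∈ Set.Icc a₁ a₂, φ x = φ y) ∧
      (∀ᵐ x, x ∈ Set.Icc a₁ a₂ → HasDerivWithinAt φ 0 (Set.Icc a₁ a₂) x) ∧
      (∀ x ∈ H, HasDerivWithinAt φ 0 (Set.Icc a₁ a₂) x) :=
  stmt1_general a₁ a₂ hab H hFσ hnull
end

section
/- Every uncountable G_δ subset S of [0,1] with Lebesgue measure zero contains a compact set C homeomorphic to the Cantor set, and there exists a nonatomic finite Borel measure ν on ℝ with ν(C) > 0 whose (topological) support is exactly C. -/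
/-!
Refining the topology of ℝ to a Polish topology in which the Borel set `S` is closed, the
Cantor–Bendixson argument gives a continuous injection `f` of Cantor space into `S`; its range `C`
is compact and homeomorphic to `ℕ → Bool`. Cantor space, seen as the compact group `ℕ → ZMod 2`,
carries a finite Haar measure, which is positive on open sets and has no atoms because `0` is not
isolated. Its pushforward under `f` is the required measure `ν`: injectivity keeps it nonatomic,
and continuity makes it charge every open set meeting `C`.
-/

open Set MeasureTheory Filter Topology Function

theorem MeasurableSet.exists_nat_bool_injection_of_not_countable {α : Type*}
    [TopologicalSpace α] [PolishSpace α] [MeasurableSpace α] [BorelSpace α] {s : Set α}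
    (hs : MeasurableSet s) (hunc : ¬s.Countable) :
    ∃ f : (ℕ → Bool) → α, range f ⊆ s ∧ Continuous f ∧ Injective f := by
  obtain ⟨t, ht_le, ht_polish, hs_closed, -⟩ := hs.isClopenable
  obtain ⟨f, hfs, hf, hinj⟩ :=
    @IsClosed.exists_nat_bool_injection_of_not_countable α t ht_polish s hs_closed hunc
  exact ⟨f, hfs, continuous_le_rng ht_le hf, hinj⟩

theorem Pi.nhdsNE_neBot {ι : Type*} [Infinite ι] {X : ι → Type*} [∀ i, TopologicalSpace (X i)]
    [∀ i, Nontrivial (X i)] (x : ∀ i, X i) : (𝓝[≠] x).NeBot := by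
  classical
  choose y hy using fun i ↦ exists_ne (x i)
  have hne : ∀ i, update x i (y i) ≠ x := fun i h ↦ hy i (by simpa using congrFun h i)
  have hlim : Tendsto (fun i ↦ update x i (y i)) cofinite (𝓝 x) := by
    refine tendsto_pi_nhds.2 fun j ↦ tendsto_const_nhds.congr' ?_
    filter_upwards [eventually_cofinite_ne j] with i hij
    rw [update_of_ne hij.symm]
  exact (tendsto_nhdsWithin_of_tendsto_nhds_of_eventually_within _ hlim
    (Eventually.of_forall hne)).neBot

theorem MeasureTheory.Measure.nullSingletonClass_map {X Y : Type*} [MeasurableSpace X]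
    [MeasurableSpace Y] [MeasurableSingletonClass Y] (μ : Measure X) [NullSingletonClass μ] {f : X → Y}
    (hf : Measurable f) (hinj : Injective f) : NullSingletonClass (μ.map f) where
  measure_singleton y := by
    rw [Measure.map_apply hf (measurableSet_singleton y)]
    exact (subsingleton_singleton.preimage hinj).measure_zero μ

theorem exists_finite_nullSingleton_openPos_measure_nat_bool :
    ∃ μ : Measure (ℕ → Bool), IsFiniteMeasure μ ∧ NullSingletonClass μ ∧ μ.IsOpenPosMeasure := by
  -- feeds the instance `IsAddHaarMeasure.nullSingletonClass`
  have := Pi.nhdsNE_neBot (0 : ℕ → ZMod 2)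
  let e : (ℕ → ZMod 2) ≃ₜ (ℕ → Bool) :=
    Homeomorph.piCongrRight fun _ ↦ (finTwoEquiv : ZMod 2 ≃ Bool).toHomeomorphOfDiscrete
  let μ : Measure (ℕ → ZMod 2) := Measure.addHaar
  exact ⟨μ.map e, inferInstance, μ.nullSingletonClass_map e.measurable e.injective,
    e.continuous.isOpenPosMeasure_map e.surjective⟩

theorem MeasureTheory.Measure.map_apply_pos_of_mem_range {X Y : Type*} [TopologicalSpace X]
    [MeasurableSpace X] [OpensMeasurableSpace X] [TopologicalSpace Y] [MeasurableSpace Y]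
    [BorelSpace Y] (μ : Measure X) [μ.IsOpenPosMeasure] {f : X → Y} (hf : Continuous f)
    {U : Set Y} (hU : IsOpen U) (hUf : (U ∩ range f).Nonempty) : 0 < μ.map f U := by
  obtain ⟨_, hxU, x, rfl⟩ := hUf
  rw [Measure.map_apply hf.measurable hU.measurableSet]
  exact (hU.preimage hf).measure_pos μ ⟨x, hxU⟩

theorem stmt2_general (S : Set ℝ) (hGδ : IsGδ S)
    (hunc : ¬ S.Countable) :
    ∃ C : Set ℝ, C ⊆ S ∧ IsCompact C ∧ Nonempty (C ≃ₜ (ℕ → Bool)) ∧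
      ∃ ν : Measure ℝ, IsFiniteMeasure ν ∧ (∀ x : ℝ, ν {x} = 0) ∧ 0 < ν C ∧
        ν Cᶜ = 0 ∧ (∀ x ∈ C, ∀ U : Set ℝ, IsOpen U → x ∈ U → 0 < ν U) := by
  obtain ⟨f, hfS, hf, hinj⟩ := hGδ.measurableSet.exists_nat_bool_injection_of_not_countable hunc
  have hC : IsCompact (range f) := isCompact_range hf
  obtain ⟨μ, hμ_fin, hμ_atoms, hμ_pos⟩ := exists_finite_nullSingleton_openPos_measure_nat_bool
  refine ⟨range f, hfS, hC, ⟨(hf.isClosedEmbedding hinj).toIsEmbedding.toHomeomorph.symm⟩,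
    μ.map f, inferInstance, (μ.nullSingletonClass_map hf.measurable hinj).measure_singleton,
    ?_, ?_, fun y hy U hU hyU ↦ μ.map_apply_pos_of_mem_range hf hU ⟨y, hyU, hy⟩⟩
  · rw [Measure.map_apply hf.measurable hC.measurableSet, preimage_range]
    exact isOpen_univ.measure_pos μ univ_nonempty
  · rw [Measure.map_apply hf.measurable hC.measurableSet.compl, preimage_compl, preimage_range,
      compl_univ, measure_empty]

theorem stmt2 (S : Set ℝ) (hS : S ⊆ Set.Icc 0 1) (hGδ : IsGδ S)
    (hunc : ¬ S.Countable) (hnull : volume S = 0) :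
    ∃ C : Set ℝ, C ⊆ S ∧ IsCompact C ∧ Nonempty (C ≃ₜ (ℕ → Bool)) ∧
      ∃ ν : Measure ℝ, IsFiniteMeasure ν ∧ (∀ x : ℝ, ν {x} = 0) ∧ 0 < ν C ∧
        ν Cᶜ = 0 ∧ (∀ x ∈ C, ∀ U : Set ℝ, IsOpen U → x ∈ U → 0 < ν U) :=
  stmt2_general S hGδ hunc
end

section
/- Let f : [0,1] → ℝ be continuous and let E_f = {x ∈ (0,1) : f has a finite derivative at x}. Then the restriction of f' to E_f is a pointwise limit of a sequence of continuous functions on E_f (i.e., f'|_{E_f} is of Baire class one on E_f). -/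
/-!
Extend f continuously to a function F on ℝ. The forward difference quotients
n (F (x + 1/n) - F x) are continuous in x, and where f is differentiable at x ∈ (0,1)
they converge to f'(x), because F agrees with f near x.
-/

open Set Filter Topology

theorem tendsto_add_inv_succ_nhdsGT (x : ℝ) :
    Tendsto (fun n : ℕ => x + ((n : ℝ) + 1)⁻¹) atTop (𝓝[>] x) := by
  have h : Tendsto (fun n : ℕ => ((n : ℝ) + 1)⁻¹) atTop (𝓝[>] 0) :=
    tendsto_inv_atTop_nhdsGT_zero.comp (tendsto_natCast_atTop_atTop.atTop_add tendsto_const_nhds)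
  have := (tendsto_map (f := (x + ·)) (x := 𝓝[>] (0:ℝ))).comp h
  rwa [Filter.map_add_left_nhdsGT, add_zero] at this

theorem HasDerivAt.tendsto_slope_add_inv_succ {g : ℝ → ℝ} {d x : ℝ} (hd : HasDerivAt g d x) :
    Tendsto (fun n : ℕ => slope g x (x + ((n : ℝ) + 1)⁻¹)) atTop (𝓝 d) :=
  (hasDerivAt_iff_tendsto_slope.mp hd).comp
    ((tendsto_add_inv_succ_nhdsGT x).mono_right (nhdsGT_le_nhdsNE x))

theorem Continuous.slope_add_const {𝕜 E : Type*} [NontriviallyNormedField 𝕜] [NormedAddCommGroup E]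
    [NormedSpace 𝕜 E] {g : 𝕜 → E} (hg : Continuous g) (c : 𝕜) :
    Continuous fun x => slope g x (x + c) := by
  simp only [slope_def_module, add_sub_cancel_left]
  fun_prop

theorem ContinuousOn.exists_continuous_eqOn_Icc {α β : Type*} [LinearOrder α] [TopologicalSpace α]
    [OrderTopology α] [TopologicalSpace β] {f : α → β} {a b : α} (hab : a ≤ b)
    (hf : ContinuousOn f (Icc a b)) : ∃ F : α → β, Continuous F ∧ EqOn F f (Icc a b) :=
  ⟨IccExtend hab ((Icc a b).domRestrict f), hf.domRestrict.Icc_extend',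
    fun _ hx => IccExtend_of_mem hab _ hx⟩

theorem stmt6 (f : ℝ → ℝ) (hf : ContinuousOn f (Set.Icc 0 1)) :
    ∃ h : ℕ → ℝ → ℝ,
      (∀ n, ContinuousOn (h n) {x ∈ Set.Ioo (0:ℝ) 1 | ∃ d : ℝ, HasDerivAt f d x}) ∧
      (∀ x ∈ {x ∈ Set.Ioo (0:ℝ) 1 | ∃ d : ℝ, HasDerivAt f d x},
        Tendsto (fun n => h n x) atTop (𝓝 (deriv f x))) := by
  obtain ⟨F, hFc, hFf⟩ := hf.exists_continuous_eqOn_Icc zero_le_one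
  refine ⟨fun n x => slope F x (x + ((n : ℝ) + 1)⁻¹),
    fun n => (hFc.slope_add_const _).continuousOn, ?_⟩
  rintro x ⟨hx, d, hd⟩
  have hFf_near : F =ᶠ[𝓝 x] f :=
    eventually_of_mem (Ioo_mem_nhds hx.1 hx.2) fun _ hy => hFf (Ioo_subset_Icc_self hy)
  rw [hd.deriv]
  exact (hd.congr_of_eventuallyEq hFf_near).tendsto_slope_add_inv_succ
end

section
/- Let a ∈ [0,1], n ∈ ℕ, and for each k ≥ n let g_k : [0,1] → ℝ satisfy g_k(a) = a and |g_k(x) − x| ≤ |x − a|² for all x ∈ [0,1]. Then the function r_n(x) = Σ_{k=n}^∞ 2^{−k} g_k(x) is differentiable at a with r_n'(a) = Σ_{k=n}^∞ 2^{−k} = 2^{−n+1}. -/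
open Set

/-!
Each `g k` agrees with the identity up to `(x - a)²`, so the weighted sum `r` agrees with
`x ↦ c x`, `c = ∑ 2^{-k}`, up to `c (x - a)²`, and `r a = c a`. A function within `O((x - a)²)`
of an affine map is differentiable at `a` with the slope of that map.
-/

open Filter Topology Asymptotics

theorem hasDerivWithinAt_of_abs_sub_le_mul_sq {f : ℝ → ℝ} {s : Set ℝ} {a f' C : ℝ}
    (h : ∀ x ∈ s, |f x - f a - (x - a) * f'| ≤ C * (x - a) ^ 2) :
    HasDerivWithinAt f f' s a := by
  rw [hasDerivWithinAt_iff_isLittleO]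
  have hbigO : (fun x => f x - f a - (x - a) • f') =O[𝓝[s] a] fun x => ‖x - a‖ ^ 2 :=
    IsBigO.of_bound C <| eventually_mem_nhdsWithin.mono fun x hx => by
      simpa [sq_abs] using h x hx
  exact hbigO.trans_isLittleO <| (isLittleO_pow_sub_sub a one_lt_two).mono nhdsWithin_le_nhds

section WeightedSum

variable {ι : Type*} {w u : ι → ℝ} {c y e : ℝ}

theorem norm_mul_sub_le_mul (hw0 : ∀ i, 0 ≤ w i) (hu : ∀ i, |u i - y| ≤ e) (i : ι) :
    ‖w i * (u i - y)‖ ≤ w i * e := by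
  rw [Real.norm_eq_abs, abs_mul, abs_of_nonneg (hw0 i)]
  exact mul_le_mul_of_nonneg_left (hu i) (hw0 i)

theorem summable_mul_of_abs_sub_le (hw : HasSum w c) (hw0 : ∀ i, 0 ≤ w i)
    (hu : ∀ i, |u i - y| ≤ e) : Summable fun i => w i * u i := by
  have hdev : Summable fun i => w i * (u i - y) :=
    (hw.summable.mul_right e).of_norm_bounded (norm_mul_sub_le_mul hw0 hu)
  simpa only [mul_sub, sub_add_cancel] using hdev.add (hw.summable.mul_right y)

theorem abs_tsum_mul_sub_le (hw : HasSum w c) (hw0 : ∀ i, 0 ≤ w i)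
    (hu : ∀ i, |u i - y| ≤ e) : |∑' i, w i * u i - c * y| ≤ c * e := by
  have hsplit : ∑' i, w i * u i - c * y = ∑' i, w i * (u i - y) := by
    rw [← (hw.mul_right y).tsum_eq, ← (summable_mul_of_abs_sub_le hw hw0 hu).tsum_sub
      (hw.summable.mul_right y)]
    simp only [mul_sub]
  rw [hsplit, ← Real.norm_eq_abs]
  exact tsum_of_norm_bounded (hw.mul_right e) (norm_mul_sub_le_mul hw0 hu)

end WeightedSum

theorem hasSum_half_pow_add (n : ℕ) :
    HasSum (fun k : ℕ => (1 / 2 : ℝ) ^ (n + k)) (2 * (1 / 2 : ℝ) ^ n) := by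
  simpa only [pow_add, mul_comm (2 : ℝ)] using hasSum_geometric_two.mul_left ((1 / 2 : ℝ) ^ n)

theorem stmt12_general (a : ℝ) (n : ℕ) (g : ℕ → ℝ → ℝ)
    (hfix : ∀ k, n ≤ k → g k a = a)
    (hclose : ∀ k, n ≤ k → ∀ x ∈ Set.Icc (0:ℝ) 1, |g k x - x| ≤ (x - a) ^ 2) :
    HasDerivWithinAt (fun x => ∑' k : ℕ, (1/2:ℝ) ^ (n + k) * g (n + k) x)
      (2 * (1/2:ℝ) ^ n) (Set.Icc 0 1) a := by
  have hw := hasSum_half_pow_add n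
  have hw0 : ∀ k : ℕ, 0 ≤ (1 / 2 : ℝ) ^ (n + k) := fun k => by positivity
  have hr_a : ∑' k : ℕ, (1 / 2 : ℝ) ^ (n + k) * g (n + k) a = 2 * (1 / 2 : ℝ) ^ n * a := by
    rw [tsum_congr fun k => by rw [hfix (n + k) (Nat.le_add_right n k)], (hw.mul_right a).tsum_eq]
  refine hasDerivWithinAt_of_abs_sub_le_mul_sq (C := 2 * (1 / 2 : ℝ) ^ n) fun x hx => ?_
  rw [hr_a, show ∀ r c : ℝ, r - c * a - (x - a) * c = r - c * x by intros; ring]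
  exact abs_tsum_mul_sub_le hw hw0 fun k => hclose (n + k) (Nat.le_add_right n k) x hx

theorem stmt12 (a : ℝ) (ha : a ∈ Set.Icc (0:ℝ) 1) (n : ℕ) (g : ℕ → ℝ → ℝ)
    (hfix : ∀ k, n ≤ k → g k a = a)
    (hclose : ∀ k, n ≤ k → ∀ x ∈ Set.Icc (0:ℝ) 1, |g k x - x| ≤ (x - a) ^ 2) :
    HasDerivWithinAt (fun x => ∑' k : ℕ, (1/2:ℝ) ^ (n + k) * g (n + k) x)
      (2 * (1/2:ℝ) ^ n) (Set.Icc 0 1) a :=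
  stmt12_general a n g hfix hclose
end
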